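/- arXiv:0710.2751 — 2 statements merged into one kernel-verified Lean document; each statement's English description precedes it below -/
import Mathlib

section
/- Let (Ω, P) be a probability space, let f : ℝ≥0 → Ω → ℕ be such that for each t the map ω ↦ f t ω is measurable, for each ω the map t ↦ f t ω is nondecreasing and right-continuous, and suppose the function Λ(t) := E[f t] is finite for every t and differentiable at every t > 0. Define the capture time T(ω) := inf{t ≥ 0 : f t ω ≥ 1} (with T(ω) = ∞ if no such t exists). Then the law of T gives zero mass to every Lebesgue-null set of positive reals: for every Borel set A ⊆ ℝ with Lebesgue measure zero, P({ω : 0 < T(ω) < ∞ and T(ω) ∈ A}) = 0. (This is the abstracted content of the paper's Theorem: for any birth-and-growth process in the class 𝒢, the time of capture T(x) of a point x admits a probability density function, where f t ω plays the role of the number N(𝒞(t,x)) of nucleation events in the causal cone, and Λ(t) = Λ(𝒞(t,x)) is continuously differentiable in t.) -/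
open scoped NNReal ENNReal
open MeasureTheory Filter

/-- The capture time: the first time `t ≥ 0` at which the counting family `f`
reaches at least `1`, with value `∞` if this never happens. -/
noncomputable def captureTime {Ω : Type*} (f : ℝ≥0 → Ω → ℕ) (ω : Ω) : ℝ≥0∞ :=
  sInf ((fun t : ℝ≥0 => (t : ℝ≥0∞)) '' {t : ℝ≥0 | 1 ≤ f t ω})

/-!
Since `f` is integer valued and right-continuous, `captureTime f ω ≤ t ↔ 1 ≤ f t ω`. Hence on the
event `s < T ≤ t` the increment `f t - f s` is at least `1`, and Markov's inequality bounds the law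
`μ` of `T = captureTime f` by `μ (s, t] ≤ Λ t - Λ s`. Near a point where `Λ' < C` this gives
`μ B ≤ 2C |B|` for all small closed balls `B`, which the Besicovitch differentiation theorem
upgrades to `μ S ≤ 2C |S|` for every set `S` of such points. A null set of positive reals is a
countable union of such slices.
-/

open Set Topology

lemma eventually_sub_le_mul_of_deriv_lt {g : ℝ → ℝ} {x C a b : ℝ}
    (hg : DifferentiableAt ℝ g x) (hC : deriv g x < C) (ha : 0 ≤ a) (hb : 0 ≤ b) :
    ∀ᶠ r in 𝓝[>] 0, g (x + a * r) - g (x - b * r) ≤ (a + b) * C * r := by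
  have hlin := (hasDerivAt_iff_isLittleO.1 hg.hasDerivAt).bound (sub_pos.2 hC)
  have hright : Tendsto (fun r => x + a * r) (𝓝 0) (𝓝 x) :=
    (by fun_prop : Continuous fun r => x + a * r).tendsto' 0 x (by simp)
  have hleft : Tendsto (fun r => x - b * r) (𝓝 0) (𝓝 x) :=
    (by fun_prop : Continuous fun r => x - b * r).tendsto' 0 x (by simp)
  filter_upwards [nhdsWithin_le_nhds (hright.eventually hlin),
    nhdsWithin_le_nhds (hleft.eventually hlin), self_mem_nhdsWithin] with r h₁ h₂ (hr : 0 < r)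
  simp only [Real.norm_eq_abs, smul_eq_mul, add_sub_cancel_left, sub_sub_cancel_left, abs_neg,
    abs_mul, abs_of_pos hr, abs_of_nonneg ha, abs_of_nonneg hb] at h₁ h₂
  nlinarith [abs_le.1 h₁, abs_le.1 h₂]

section Differentiation

variable {μ : Measure ℝ} [SFinite μ] {g : ℝ → ℝ} {U : Set ℝ}

lemma measure_le_mul_volume_of_deriv_lt (hU : IsOpen U) (hg : ∀ x ∈ U, DifferentiableAt ℝ g x)
    (hμ : ∀ s t, s ≤ t → Icc s t ⊆ U → μ (Ioc s t) ≤ ENNReal.ofReal (g t - g s))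
    {C : ℝ≥0} {S : Set ℝ} (hSU : S ⊆ U) (hS : ∀ x ∈ S, deriv g x < C) :
    μ S ≤ 2 * C * volume S := by
  refine (Besicovitch.vitaliFamily μ).measure_le_of_frequently_le ((2 * C) • volume) .rfl S
    fun x hx => ?_
  refine (Besicovitch.tendsto_filterAt μ x).frequently (Eventually.frequently ?_)
  have hball : ∀ᶠ r in 𝓝[>] 0, Metric.closedBall x (2 * r) ⊆ U :=
    nhdsWithin_le_nhds <| ((continuous_const_mul 2).tendsto' 0 0 (mul_zero 2)).eventually
      (eventually_closedBall_subset (hU.mem_nhds (hSU hx)))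
  filter_upwards [hball, self_mem_nhdsWithin,
    eventually_sub_le_mul_of_deriv_lt (hg x (hSU hx)) (hS x hx) zero_le_two zero_le_two]
    with r hrU (hr0 : 0 < r) hr
  rw [Real.closedBall_eq_Icc] at hrU
  -- `μ` is only controlled on half-open intervals, hence the enlargement to `(x - 2r, x + 2r]`.
  calc μ (Metric.closedBall x r) ≤ μ (Ioc (x - 2 * r) (x + 2 * r)) := by
        refine measure_mono fun y hy => ?_
        rw [Real.closedBall_eq_Icc] at hy
        exact ⟨by linarith [hy.1], by linarith [hy.2]⟩
    _ ≤ ENNReal.ofReal (g (x + 2 * r) - g (x - 2 * r)) := hμ _ _ (by linarith) hrU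
    _ ≤ ENNReal.ofReal ((2 * C : ℝ≥0) * (2 * r)) :=
        ENNReal.ofReal_le_ofReal (by push_cast; linarith)
    _ = ((2 * C) • volume) (Metric.closedBall x r) := by
        rw [Measure.smul_apply, Real.volume_closedBall, ENNReal.smul_def, smul_eq_mul,
          ENNReal.ofReal_mul (by positivity), ENNReal.ofReal_coe_nnreal]

theorem restrict_absolutelyContinuous_of_measure_Ioc_le (hU : IsOpen U)
    (hg : ∀ x ∈ U, DifferentiableAt ℝ g x)
    (hμ : ∀ s t, s ≤ t → Icc s t ⊆ U → μ (Ioc s t) ≤ ENNReal.ofReal (g t - g s)) :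
    μ.restrict U ≪ volume := by
  refine Measure.AbsolutelyContinuous.mk fun A _ hA => ?_
  rw [Measure.restrict_apply' hU.measurableSet]
  have hslice (N : ℕ) : μ {x ∈ A ∩ U | deriv g x < N} = 0 := by
    refine le_antisymm ?_ zero_le
    calc μ {x ∈ A ∩ U | deriv g x < N}
        ≤ 2 * (N : ℝ≥0) * volume {x ∈ A ∩ U | deriv g x < N} :=
          measure_le_mul_volume_of_deriv_lt hU hg hμ (fun x hx => hx.1.2) fun x hx => hx.2
      _ = 0 := by
          rw [measure_mono_null (fun x hx => hx.1.1) hA, mul_zero]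
  refine measure_mono_null (fun x hx => ?_) (measure_iUnion_null hslice)
  obtain ⟨N, hN⟩ := exists_nat_gt (deriv g x)
  exact mem_iUnion.2 ⟨N, hx, hN⟩

end Differentiation

lemma ENNReal.toReal_mem_Ioc_iff {x : ℝ≥0∞} {s t : ℝ≥0} :
    x.toReal ∈ Ioc (s : ℝ) t ↔ (s : ℝ≥0∞) < x ∧ x ≤ t := by
  induction x using ENNReal.recTopCoe <;> simp

section CaptureTime

variable {Ω : Type*} {f : ℝ≥0 → Ω → ℕ}

lemma captureTime_le_iff (hmono : ∀ ω : Ω, Monotone (fun t => f t ω))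
    (hrc : ∀ ω : Ω, ∀ t : ℝ≥0, Tendsto (fun s => f s ω) (𝓝[≥] t) (𝓝 (f t ω)))
    (ω : Ω) (t : ℝ≥0) :
    captureTime f ω ≤ t ↔ 1 ≤ f t ω := by
  refine ⟨fun h => ?_, fun h => sInf_le ⟨t, h, rfl⟩⟩
  by_contra! ht
  have hconst : ∀ᶠ s in 𝓝[≥] t, f s ω = f t ω :=
    tendsto_pure.1 (by simpa only [nhds_discrete] using hrc ω t)
  obtain ⟨u, htu, hu⟩ := mem_nhdsGE_iff_exists_Ico_subset.1 hconst
  have hzero : ∀ s < u, f s ω = 0 := by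
    intro s hsu
    rcases le_total s t with hst | hts
    · have : f s ω ≤ f t ω := hmono ω hst
      omega
    · have : f s ω = f t ω := hu ⟨hts, hsu⟩
      omega
  have hu_le : (u : ℝ≥0∞) ≤ captureTime f ω := by
    refine le_sInf ?_
    rintro _ ⟨s, hs, rfl⟩
    exact ENNReal.coe_le_coe.2 (not_lt.1 fun hsu => by simp [hzero s hsu] at hs)
  exact absurd (ENNReal.coe_le_coe.1 (hu_le.trans h)) (not_le.2 htu)

variable [MeasurableSpace Ω]

lemma measurable_captureTime (hmeas : ∀ t : ℝ≥0, Measurable (f t))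
    (hmono : ∀ ω : Ω, Monotone (fun t => f t ω))
    (hrc : ∀ ω : Ω, ∀ t : ℝ≥0, Tendsto (fun s => f s ω) (𝓝[≥] t) (𝓝 (f t ω))) :
    Measurable (captureTime f) := by
  refine measurable_of_Iic fun x => ?_
  induction x using ENNReal.recTopCoe with
  | top => simp
  | coe t =>
    have : captureTime f ⁻¹' Iic (t : ℝ≥0∞) = f t ⁻¹' Ici 1 :=
      ext fun ω => captureTime_le_iff hmono hrc ω t
    rw [this]
    exact hmeas t measurableSet_Ici

lemma measure_captureTime_mem_Ioc_le (P : Measure Ω)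
    (hmono : ∀ ω : Ω, Monotone (fun t => f t ω))
    (hrc : ∀ ω : Ω, ∀ t : ℝ≥0, Tendsto (fun s => f s ω) (𝓝[≥] t) (𝓝 (f t ω)))
    (hint : ∀ t : ℝ≥0, Integrable (fun ω => (f t ω : ℝ)) P) {s t : ℝ≥0} (hst : s ≤ t) :
    P {ω | (s : ℝ≥0∞) < captureTime f ω ∧ captureTime f ω ≤ t}
      ≤ ENNReal.ofReal (∫ ω, (f t ω : ℝ) ∂P - ∫ ω, (f s ω : ℝ) ∂P) := by
  set g : Ω → ℝ := fun ω => (f t ω : ℝ) - f s ω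
  have hg : Integrable g P := (hint t).sub (hint s)
  have hg_nonneg : 0 ≤ᵐ[P] g := ae_of_all _ fun ω => sub_nonneg.2 (by exact_mod_cast hmono ω hst)
  have hsub : {ω | (s : ℝ≥0∞) < captureTime f ω ∧ captureTime f ω ≤ t}
      ⊆ {ω | 1 ≤ ENNReal.ofReal (g ω)} := by
    rintro ω ⟨hs, ht⟩
    have hfs : f s ω = 0 := by
      by_contra! h
      exact not_le.2 hs ((captureTime_le_iff hmono hrc ω s).2 (Nat.one_le_iff_ne_zero.2 h))
    have hft := (captureTime_le_iff hmono hrc ω t).1 ht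
    show 1 ≤ ENNReal.ofReal ((f t ω : ℝ) - f s ω)
    rw [ENNReal.one_le_ofReal, hfs, Nat.cast_zero, sub_zero]
    exact_mod_cast hft
  calc P {ω | (s : ℝ≥0∞) < captureTime f ω ∧ captureTime f ω ≤ t}
      ≤ P {ω | 1 ≤ ENNReal.ofReal (g ω)} := measure_mono hsub
    _ ≤ ∫⁻ ω, ENNReal.ofReal (g ω) ∂P := by
        simpa using mul_meas_ge_le_lintegral₀ hg.aemeasurable.ennreal_ofReal 1
    _ = ENNReal.ofReal (∫ ω, (f t ω : ℝ) ∂P - ∫ ω, (f s ω : ℝ) ∂P) := by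
        rw [← ofReal_integral_eq_lintegral_ofReal hg hg_nonneg, integral_sub (hint t) (hint s)]

end CaptureTime

/-- For a monotone, right-continuous, ℕ-valued counting family with finite mean
`Λ` that is differentiable at every positive time, the law of the capture time
gives zero mass to every Lebesgue-null Borel set of positive reals. -/
theorem captureTime_law_absolutelyContinuous
    {Ω : Type*} [MeasurableSpace Ω] (P : Measure Ω) [IsProbabilityMeasure P]
    (f : ℝ≥0 → Ω → ℕ)
    (hmeas : ∀ t : ℝ≥0, Measurable (f t))
    (hmono : ∀ ω : Ω, Monotone (fun t => f t ω))
    (hrc : ∀ ω : Ω, ∀ t : ℝ≥0,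
      Tendsto (fun s => f s ω) (nhdsWithin t (Set.Ici t)) (nhds (f t ω)))
    (hint : ∀ t : ℝ≥0, Integrable (fun ω => (f t ω : ℝ)) P)
    (Λ : ℝ → ℝ)
    (hΛ : ∀ t : ℝ≥0, Λ (t : ℝ) = ∫ ω, (f t ω : ℝ) ∂P)
    (hdiff : ∀ t : ℝ, 0 < t → DifferentiableAt ℝ Λ t) :
    ∀ A : Set ℝ, MeasurableSet A → volume A = 0 →
      P {ω | 0 < captureTime f ω ∧ captureTime f ω < ⊤ ∧
             (captureTime f ω).toReal ∈ A} = 0 := by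
  intro A hA hA0
  set τ : Ω → ℝ := fun ω => (captureTime f ω).toReal
  have hτ : Measurable τ := (measurable_captureTime hmeas hmono hrc).ennreal_toReal
  have hlaw : (P.map τ).restrict (Ioi 0) ≪ volume := by
    refine restrict_absolutelyContinuous_of_measure_Ioc_le isOpen_Ioi hdiff
      fun s t hst hpos => ?_
    lift s to ℝ≥0 using (hpos ⟨le_rfl, hst⟩ : (0 : ℝ) < s).le
    lift t to ℝ≥0 using (hpos ⟨hst, le_rfl⟩ : (0 : ℝ) < t).le
    rw [Measure.map_apply hτ measurableSet_Ioc, hΛ, hΛ]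
    exact (measure_mono fun ω hω => ENNReal.toReal_mem_Ioc_iff.1 hω).trans
      (measure_captureTime_mem_Ioc_le P hmono hrc hint (NNReal.coe_le_coe.1 hst))
  have hnull := hlaw hA0
  rw [Measure.restrict_apply hA, Measure.map_apply hτ (hA.inter measurableSet_Ioi)] at hnull
  refine measure_mono_null ?_ hnull
  rintro ω ⟨hpos, hfin, hmem⟩
  exact ⟨hmem, ENNReal.toReal_pos hpos.ne' hfin.ne⟩
end

section
/- Let μ be a finite Borel measure on ℝ and let g : ℝ → ℝ be a nondecreasing function that is differentiable at every point. If μ((s, t]) ≤ g(t) − g(s) for all s ≤ t, then μ is absolutely continuous with respect to Lebesgue measure. -/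
/-!
Differentiability of `g` gives, at every `x`, a bound `|g y - g x| ≤ c |y - x|` near `x`, hence
`μ (closedBall x r) ≤ μ (Ioc (x - 2r) (x + 2r)) ≤ 4 c r = 2 c · volume (closedBall x r)` for small
`r`: the upper density of `μ` with respect to Lebesgue measure is finite everywhere. By the
Besicovitch covering theorem, a Lebesgue-null set on which this density is at most `n` has
`μ`-measure at most `n · 0`, and countably many such sets exhaust any null set.
-/

open MeasureTheory Metric Set Filter Asymptotics
open scoped ENNReal NNReal Topology

namespace MeasureTheory.Measure

theorem absolutelyContinuous_of_frequently_measure_closedBall_le {α : Type*} [MetricSpace α]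
    [MeasurableSpace α] [BorelSpace α] [SecondCountableTopology α] [HasBesicovitchCovering α]
    {μ ν : Measure α} [SFinite μ] [IsLocallyFiniteMeasure ν]
    (h : ∀ x, ∃ C : ℝ≥0, ∃ᶠ r in 𝓝[>] 0, μ (closedBall x r) ≤ C * ν (closedBall x r)) :
    μ ≪ ν := by
  intro s hs
  let s' (n : ℕ) := {x ∈ s | ∃ᶠ r in 𝓝[>] 0, μ (closedBall x r) ≤ n * ν (closedBall x r)}
  have hcover : s ⊆ ⋃ n, s' n := fun x hx ↦ by
    obtain ⟨C, hC⟩ := h x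
    obtain ⟨n, hn⟩ := exists_nat_ge C
    refine mem_iUnion.2 ⟨n, hx, hC.mono fun r hr ↦ hr.trans ?_⟩
    gcongr
    exact_mod_cast hn
  refine measure_mono_null hcover (measure_iUnion_null fun n ↦ ?_)
  have hle : μ (s' n) ≤ ((n : ℝ≥0) • ν) (s' n) :=
    (Besicovitch.vitaliFamily μ).measure_le_of_frequently_le _ .rfl _ fun x hx ↦
      (Besicovitch.tendsto_filterAt μ x).frequently (by simpa using hx.2)
  have hν : ν (s' n) = 0 := measure_mono_null (sep_subset _ _) hs
  simpa [hν] using hle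

variable (μ : Measure ℝ) [IsFiniteMeasure μ] {g : ℝ → ℝ}

theorem toReal_measure_closedBall_le_sub
    (hle : ∀ s t : ℝ, s ≤ t → (μ (Ioc s t)).toReal ≤ g t - g s) (x : ℝ) {r : ℝ} (hr : 0 < r) :
    (μ (closedBall x r)).toReal ≤ g (x + 2 * r) - g (x - 2 * r) := by
  have hsub : closedBall x r ⊆ Ioc (x - 2 * r) (x + 2 * r) := by
    rw [Real.closedBall_eq_Icc]
    exact Icc_subset_Ioc_iff (by linarith) |>.2 ⟨by linarith, by linarith⟩
  exact (ENNReal.toReal_mono (measure_ne_top μ _) (measure_mono hsub)).trans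
    (hle _ _ (by linarith))

theorem exists_eventually_measure_closedBall_le_mul_volume
    (hle : ∀ s t : ℝ, s ≤ t → (μ (Ioc s t)).toReal ≤ g t - g s) {x : ℝ}
    (hg : (g · - g x) =O[𝓝 x] (· - x)) :
    ∃ C : ℝ≥0, ∀ᶠ r in 𝓝[>] 0, μ (closedBall x r) ≤ C * volume (closedBall x r) := by
  obtain ⟨c, hc0, hc⟩ := hg.exists_nonneg
  lift c to ℝ≥0 using hc0
  have hshift (a : ℝ) : Tendsto (fun r ↦ x + a * r) (𝓝[>] 0) (𝓝 x) := by
    have : Continuous (fun r ↦ x + a * r) := by fun_prop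
    simpa using (this.tendsto' 0 x (by simp)).mono_left nhdsWithin_le_nhds
  refine ⟨2 * c, ?_⟩
  filter_upwards [self_mem_nhdsWithin, (hshift 2).eventually hc.bound,
    (hshift (-2)).eventually hc.bound] with r (hr : 0 < r) hright hleft
  simp only [Real.norm_eq_abs, add_sub_cancel_left, abs_mul, abs_neg, abs_two,
    abs_of_pos hr] at hright hleft
  rw [neg_mul, ← sub_eq_add_neg] at hleft
  have hbound : (μ (closedBall x r)).toReal ≤ 2 * c * (2 * r) := by
    linarith [toReal_measure_closedBall_le_sub μ hle x hr,
      le_abs_self (g (x + 2 * r) - g x), neg_abs_le (g (x - 2 * r) - g x)]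
  rw [Real.volume_closedBall, ← ENNReal.ofReal_coe_nnreal, ← ENNReal.ofReal_mul (by positivity)]
  exact (ENNReal.le_ofReal_iff_toReal_le (measure_ne_top μ _) (by positivity)).2
    (by exact_mod_cast hbound)

end MeasureTheory.Measure

theorem absolutelyContinuous_of_Ioc_le_increment_general
    (μ : Measure ℝ) [IsFiniteMeasure μ]
    (g : ℝ → ℝ)
    (hg_diff : ∀ x : ℝ, DifferentiableAt ℝ g x)
    (hle : ∀ s t : ℝ, s ≤ t → (μ (Set.Ioc s t)).toReal ≤ g t - g s) :
    μ ≪ volume :=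
  Measure.absolutelyContinuous_of_frequently_measure_closedBall_le fun x ↦
    have ⟨C, hC⟩ := μ.exists_eventually_measure_closedBall_le_mul_volume hle
      (hg_diff x).hasDerivAt.isBigO_sub
    ⟨C, hC.frequently⟩

/-- A finite Borel measure on `ℝ` whose mass on half-open intervals is dominated
by the increments of a nondecreasing everywhere-differentiable function is
absolutely continuous with respect to Lebesgue measure. -/
theorem absolutelyContinuous_of_Ioc_le_increment
    (μ : Measure ℝ) [IsFiniteMeasure μ]
    (g : ℝ → ℝ) (hg_mono : Monotone g)
    (hg_diff : ∀ x : ℝ, DifferentiableAt ℝ g x)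
    (hle : ∀ s t : ℝ, s ≤ t → (μ (Set.Ioc s t)).toReal ≤ g t - g s) :
    μ ≪ volume :=
  absolutelyContinuous_of_Ioc_le_increment_general μ g hg_diff hle
end
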